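/- Fix an integer N ≥ 1, a real τ, and write g := g(τ), w := w(τ), z := z(τ), U_n := e^{iτε}·V_n(τ). Then for every m with 1 ≤ m ≤ N and every vector ζ ∈ ℂ^{N+1} (indexed by 0,…,N), the vector U_1·⋯·U_m·ζ has components: (U_1⋯U_m ζ)_0 = e^{imτε}·((gz)^m ζ_0 + Σ_{j=1}^m gw(gz)^{j−1} ζ_j); (U_1⋯U_m ζ)_k = e^{imτε}·(gw(gz)^{m−k} ζ_0 + g·conj(z)·ζ_k + Σ_{j=k+1}^m (gw)²(gz)^{j−k−1} ζ_j) for 1 ≤ k < m; (U_1⋯U_m ζ)_m = e^{imτε}·(gw·ζ_0 + g·conj(z)·ζ_m); and (U_1⋯U_m ζ)_k = e^{imτε}·ζ_k for m < k ≤ N. -/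
import Mathlib


noncomputable def gf (E ε η t : ℝ) : ℂ :=
  Complex.exp (Complex.I * t * (E - ε) / 2)

noncomputable def wf (E ε η t : ℝ) : ℂ :=
  (2 * Complex.I * η / Real.sqrt ((E - ε) ^ 2 + 4 * η ^ 2)) *
    Real.sin (t * Real.sqrt ((E - ε) ^ 2 / 4 + η ^ 2))

noncomputable def zf (E ε η t : ℝ) : ℂ :=
  (Real.cos (t * Real.sqrt ((E - ε) ^ 2 / 4 + η ^ 2)) : ℂ) +
    (Complex.I * (E - ε) / Real.sqrt ((E - ε) ^ 2 + 4 * η ^ 2)) *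
      Real.sin (t * Real.sqrt ((E - ε) ^ 2 / 4 + η ^ 2))

noncomputable def Vmat (E ε η : ℝ) (N n : ℕ) (t : ℝ) :
    Matrix (Fin (N + 1)) (Fin (N + 1)) ℂ :=
  fun j k =>
    if j.val = 0 then
      gf E ε η t * zf E ε η t * (if k.val = 0 then 1 else 0) +
        gf E ε η t * wf E ε η t * (if k.val = n then 1 else 0)
    else if j.val = n then
      gf E ε η t * wf E ε η t * (if k.val = 0 then 1 else 0) +
        gf E ε η t * zf E ε η (-t) * (if k.val = n then 1 else 0)
    else if j = k then 1 else 0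

lemma zf_neg (E ε η t : ℝ) : zf E ε η (-t) = (starRingEnd ℂ) (zf E ε η t) := by
  simp only [zf, neg_mul, Real.sin_neg, Real.cos_neg, map_add, map_mul, map_div₀,
    Complex.conj_ofReal, Complex.conj_I, Complex.ofReal_neg, map_sub]
  ring

lemma sum_single (N c : ℕ) (hc : c < N + 1) (f : Fin (N + 1) → ℂ) :
    (∑ j : Fin (N + 1), if c ≤ j.val ∧ j.val ≤ c then f j else 0) = f ⟨c, hc⟩ := by
  have key : ∀ j : Fin (N + 1), (if c ≤ j.val ∧ j.val ≤ c then f j else 0)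
      = (if j = ⟨c, hc⟩ then f j else 0) := by
    intro j
    by_cases h : j = ⟨c, hc⟩
    · subst h; simp
    · rw [if_neg h, if_neg]
      intro hcc
      exact h (Fin.ext (le_antisymm hcc.2 hcc.1))
  rw [Finset.sum_congr rfl fun j _ => key j, Finset.sum_ite_eq' Finset.univ]
  simp

lemma sum_split (N a m : ℕ) (ham : a ≤ m) (hm : m + 1 < N + 1) (f : Fin (N + 1) → ℂ) :
    (∑ j : Fin (N + 1), if a ≤ j.val ∧ j.val ≤ m + 1 then f j else 0) =
    (∑ j : Fin (N + 1), if a ≤ j.val ∧ j.val ≤ m then f j else 0) + f ⟨m + 1, hm⟩ := by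
  have key : ∀ j : Fin (N + 1), (if a ≤ j.val ∧ j.val ≤ m + 1 then f j else 0) =
      (if a ≤ j.val ∧ j.val ≤ m then f j else 0) + (if j = ⟨m + 1, hm⟩ then f j else 0) := by
    intro j
    by_cases h : j = ⟨m + 1, hm⟩
    · have hv : (j : ℕ) = m + 1 := by rw [h]
      rw [if_pos (⟨by omega, by omega⟩ : a ≤ (j : ℕ) ∧ (j : ℕ) ≤ m + 1),
        if_neg (by omega : ¬(a ≤ (j : ℕ) ∧ (j : ℕ) ≤ m)), if_pos h, zero_add]
    · have hv : j.val ≠ m + 1 := fun hh => h (Fin.ext hh)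
      rw [if_neg h, add_zero]
      split_ifs with h1 h2 <;> first | rfl | omega
  rw [Finset.sum_congr rfl fun j _ => key j, Finset.sum_add_distrib,
    Finset.sum_ite_eq' Finset.univ]
  simp

lemma row_sum (N : ℕ) (a b : ℂ) (p q : ℕ) (hp : p < N + 1) (hq : q < N + 1)
    (ζ : Fin (N + 1) → ℂ) :
    (∑ k : Fin (N + 1), (a * (if (k : ℕ) = p then 1 else 0) +
      b * (if (k : ℕ) = q then 1 else 0)) * ζ k) = a * ζ ⟨p, hp⟩ + b * ζ ⟨q, hq⟩ := by
  have key : ∀ k : Fin (N + 1), (a * (if (k : ℕ) = p then 1 else 0) +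
      b * (if (k : ℕ) = q then 1 else 0)) * ζ k
      = (if k = ⟨p, hp⟩ then a * ζ k else 0) + (if k = ⟨q, hq⟩ then b * ζ k else 0) := by
    intro k
    by_cases h1 : k = ⟨p, hp⟩ <;> by_cases h2 : k = ⟨q, hq⟩ <;>
      simp_all [Fin.ext_iff] <;> ring
  rw [Finset.sum_congr rfl fun k _ => key k, Finset.sum_add_distrib,
    Finset.sum_ite_eq' Finset.univ, Finset.sum_ite_eq' Finset.univ]
  simp

lemma Vmat_mulVec (E ε η : ℝ) (N n : ℕ) (hn1 : 1 ≤ n) (hnN : n ≤ N) (t : ℝ)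
    (ζ : Fin (N + 1) → ℂ) (j : Fin (N + 1)) :
    (Vmat E ε η N n t).mulVec ζ j =
      if j.val = 0 then
        gf E ε η t * zf E ε η t * ζ 0 + gf E ε η t * wf E ε η t * ζ ⟨n, by omega⟩
      else if j.val = n then
        gf E ε η t * wf E ε η t * ζ 0 + gf E ε η t * zf E ε η (-t) * ζ ⟨n, by omega⟩
      else ζ j := by
  have hn' : n < N + 1 := by omega
  have hdef : (Vmat E ε η N n t).mulVec ζ j
      = ∑ k : Fin (N + 1), Vmat E ε η N n t j k * ζ k := rfl
  by_cases hj0 : j.val = 0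
  · rw [if_pos hj0, hdef,
      Finset.sum_congr rfl (fun k _ =>
        show Vmat E ε η N n t j k * ζ k =
          (gf E ε η t * zf E ε η t * (if (k : ℕ) = 0 then 1 else 0) +
            gf E ε η t * wf E ε η t * (if (k : ℕ) = n then 1 else 0)) * ζ k from by
        simp only [Vmat]; rw [if_pos hj0])]
    exact row_sum N _ _ 0 n (by omega) hn' ζ
  · by_cases hjn : j.val = n
    · rw [if_neg hj0, if_pos hjn, hdef,
        Finset.sum_congr rfl (fun k _ =>
          show Vmat E ε η N n t j k * ζ k =
            (gf E ε η t * wf E ε η t * (if (k : ℕ) = 0 then 1 else 0) +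
              gf E ε η t * zf E ε η (-t) * (if (k : ℕ) = n then 1 else 0)) * ζ k from by
          simp only [Vmat]; rw [if_neg hj0, if_pos hjn])]
      exact row_sum N _ _ 0 n (by omega) hn' ζ
    · rw [if_neg hj0, if_neg hjn, hdef,
        Finset.sum_congr rfl (fun k _ =>
          show Vmat E ε η N n t j k * ζ k = (if j = k then ζ k else 0) from by
            simp only [Vmat]; rw [if_neg hj0, if_neg hjn, ite_mul, one_mul, zero_mul]),
        Finset.sum_ite_eq Finset.univ]
      simp

lemma main_aux (E ε η τ : ℝ) (N : ℕ) :
    ∀ m : ℕ, 1 ≤ m → m ≤ N → ∀ ζ v : Fin (N + 1) → ℂ,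
      v = (((List.range m).map
        (fun i => Complex.exp (Complex.I * τ * ε) • Vmat E ε η N (i + 1) τ)).prod).mulVec ζ →
    (v 0 = Complex.exp (Complex.I * m * τ * ε) *
      ((gf E ε η τ * zf E ε η τ) ^ m * ζ 0 +
        ∑ j : Fin (N + 1), if 1 ≤ j.val ∧ j.val ≤ m then
          gf E ε η τ * wf E ε η τ * (gf E ε η τ * zf E ε η τ) ^ (j.val - 1) * ζ j else 0)) ∧
    (∀ k : Fin (N + 1), 1 ≤ k.val → k.val < m →
      v k = Complex.exp (Complex.I * m * τ * ε) *
        (gf E ε η τ * wf E ε η τ * (gf E ε η τ * zf E ε η τ) ^ (m - k.val) * ζ 0 +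
          gf E ε η τ * (starRingEnd ℂ) (zf E ε η τ) * ζ k +
          ∑ j : Fin (N + 1), if k.val + 1 ≤ j.val ∧ j.val ≤ m then
            (gf E ε η τ * wf E ε η τ) ^ 2 * (gf E ε η τ * zf E ε η τ) ^ (j.val - k.val - 1) * ζ j else 0)) ∧
    (∀ k : Fin (N + 1), k.val = m →
      v k = Complex.exp (Complex.I * m * τ * ε) *
        (gf E ε η τ * wf E ε η τ * ζ 0 + gf E ε η τ * (starRingEnd ℂ) (zf E ε η τ) * ζ k)) ∧
    (∀ k : Fin (N + 1), m < k.val →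
      v k = Complex.exp (Complex.I * m * τ * ε) * ζ k) := by
  intro m hm1
  set g := gf E ε η τ with hgdef
  set w := wf E ε η τ with hwdef
  set z := zf E ε η τ with hzdef
  set e := Complex.exp (Complex.I * τ * ε) with hedef
  induction m, hm1 using Nat.le_induction with
  | base =>
    intro hN ζ v hv
    have h1 : (1 : ℕ) < N + 1 := by omega
    have hprod : ((List.range 1).map (fun i => e • Vmat E ε η N (i + 1) τ)).prod
        = e • Vmat E ε η N 1 τ := by
      simp [List.range_succ]
    have hvk : ∀ k : Fin (N + 1), v k = e *
        (if (k : ℕ) = 0 then g * z * ζ 0 + g * w * ζ ⟨1, h1⟩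
         else if (k : ℕ) = 1 then g * w * ζ 0 + g * (starRingEnd ℂ) z * ζ ⟨1, h1⟩
         else ζ k) := by
      intro k
      rw [hv, hprod, Matrix.smul_mulVec, Pi.smul_apply, smul_eq_mul,
        Vmat_mulVec E ε η N 1 le_rfl hN τ ζ k, ← zf_neg, ← hzdef]
    have hE1 : Complex.exp (Complex.I * ((1 : ℕ) : ℂ) * τ * ε) = e := by
      rw [hedef]; norm_num
    refine ⟨?_, ?_, ?_, ?_⟩
    · rw [hvk 0, hE1, sum_single N 1 h1
        (fun j => g * w * (g * z) ^ ((j : ℕ) - 1) * ζ j)]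
      norm_num
    · intro k hk1 hk2; omega
    · intro k hk
      have : k = ⟨1, h1⟩ := Fin.ext hk
      subst this
      rw [hvk ⟨1, h1⟩, hE1]
      norm_num
    · intro k hk
      rw [hvk k, hE1, if_neg (by omega), if_neg (by omega)]
  | succ m hm ih =>
    intro hmN ζ v hv
    have hmN' : m ≤ N := by omega
    have hlt : m + 1 < N + 1 := by omega
    have hprod : ((List.range (m + 1)).map (fun i => e • Vmat E ε η N (i + 1) τ)).prod
        = ((List.range m).map (fun i => e • Vmat E ε η N (i + 1) τ)).prod *
          (e • Vmat E ε η N (m + 1) τ) := by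
      rw [List.range_succ, List.map_append, List.prod_append]
      simp
    set ζ' := (e • Vmat E ε η N (m + 1) τ).mulVec ζ with hζdef
    have hv' : v = (((List.range m).map
        (fun i => e • Vmat E ε η N (i + 1) τ)).prod).mulVec ζ' := by
      rw [hv, hprod, ← Matrix.mulVec_mulVec]
    obtain ⟨C0, C1, C2, C3⟩ := ih hmN' ζ' v hv'
    have hz' : ∀ j : Fin (N + 1), ζ' j = e *
        (if (j : ℕ) = 0 then g * z * ζ 0 + g * w * ζ ⟨m + 1, hlt⟩
         else if (j : ℕ) = m + 1 then g * w * ζ 0 + g * (starRingEnd ℂ) z * ζ ⟨m + 1, hlt⟩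
         else ζ j) := by
      intro j
      rw [hζdef, Matrix.smul_mulVec, Pi.smul_apply, smul_eq_mul,
        Vmat_mulVec E ε η N (m + 1) (by omega) (by omega) τ ζ j, ← zf_neg, ← hzdef]
    have hζ0 : ζ' 0 = e * (g * z * ζ 0 + g * w * ζ ⟨m + 1, hlt⟩) := by
      rw [hz' 0]; norm_num
    have hζM : ζ' ⟨m + 1, hlt⟩ = e * (g * w * ζ 0 + g * (starRingEnd ℂ) z * ζ ⟨m + 1, hlt⟩) := by
      rw [hz' ⟨m + 1, hlt⟩]; norm_num
    have hζmid : ∀ j : Fin (N + 1), (j : ℕ) ≠ 0 → (j : ℕ) ≠ m + 1 → ζ' j = e * ζ j := by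
      intro j hj1 hj2
      rw [hz' j, if_neg hj1, if_neg hj2]
    have hE : Complex.exp (Complex.I * ((m : ℂ) + 1) * τ * ε)
        = Complex.exp (Complex.I * (m : ℂ) * τ * ε) * e := by
      rw [hedef, ← Complex.exp_add]; congr 1; ring
    refine ⟨?_, ?_, ?_, ?_⟩
    · -- component 0
      have hsum : (∑ j : Fin (N + 1), if 1 ≤ (j : ℕ) ∧ (j : ℕ) ≤ m then
            g * w * (g * z) ^ ((j : ℕ) - 1) * ζ' j else 0)
          = e * (∑ j : Fin (N + 1), if 1 ≤ (j : ℕ) ∧ (j : ℕ) ≤ m then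
            g * w * (g * z) ^ ((j : ℕ) - 1) * ζ j else 0) := by
        rw [Finset.mul_sum]
        refine Finset.sum_congr rfl fun j _ => ?_
        by_cases hc : 1 ≤ (j : ℕ) ∧ (j : ℕ) ≤ m
        · rw [if_pos hc, if_pos hc, hζmid j (by omega) (by omega)]; ring
        · rw [if_neg hc, if_neg hc, mul_zero]
      push_cast
      rw [hE, sum_split N 1 m hm hlt (fun j => g * w * (g * z) ^ ((j : ℕ) - 1) * ζ j),
        C0, hζ0, hsum]
      simp only [Nat.add_sub_cancel]
      ring
    · -- component k, 1 ≤ k < m + 1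
      intro k hk1 hk2
      push_cast
      rw [hE]
      by_cases hkm : (k : ℕ) < m
      · have hsum : (∑ j : Fin (N + 1), if (k : ℕ) + 1 ≤ (j : ℕ) ∧ (j : ℕ) ≤ m then
              (g * w) ^ 2 * (g * z) ^ ((j : ℕ) - (k : ℕ) - 1) * ζ' j else 0)
            = e * (∑ j : Fin (N + 1), if (k : ℕ) + 1 ≤ (j : ℕ) ∧ (j : ℕ) ≤ m then
              (g * w) ^ 2 * (g * z) ^ ((j : ℕ) - (k : ℕ) - 1) * ζ j else 0) := by
          rw [Finset.mul_sum]
          refine Finset.sum_congr rfl fun j _ => ?_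
          by_cases hc : (k : ℕ) + 1 ≤ (j : ℕ) ∧ (j : ℕ) ≤ m
          · rw [if_pos hc, if_pos hc, hζmid j (by omega) (by omega)]; ring
          · rw [if_neg hc, if_neg hc, mul_zero]
        rw [sum_split N ((k : ℕ) + 1) m (by omega) hlt
            (fun j => (g * w) ^ 2 * (g * z) ^ ((j : ℕ) - (k : ℕ) - 1) * ζ j),
          C1 k hk1 hkm, hζ0, hζmid k (by omega) (by omega), hsum]
        rw [show m + 1 - (k : ℕ) = (m - (k : ℕ)) + 1 by omega, Nat.add_sub_cancel]
        ring
      · have hkm' : (k : ℕ) = m := by omega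
        rw [C2 k hkm', hζ0, hζmid k (by omega) (by omega), hkm',
          sum_single N (m + 1) hlt
            (fun j => (g * w) ^ 2 * (g * z) ^ ((j : ℕ) - m - 1) * ζ j)]
        rw [show m + 1 - m = 1 by omega]
        norm_num
        ring
    · -- component k, k.val = m + 1
      intro k hk
      push_cast
      rw [hE, C3 k (by omega), hz' k, if_neg (by omega), if_pos hk]
      have hkM : ζ ⟨m + 1, hlt⟩ = ζ k := by
        congr 1
        exact (Fin.ext hk).symm
      rw [hkM]
      ring
    · -- component k, m + 1 < k.val
      intro k hk
      push_cast
      rw [hE, C3 k (by omega), hζmid k (by omega) (by omega)]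
      ring

theorem stmt6 (E ε η : ℝ) (hη : 0 < η) (N : ℕ) (hN : 1 ≤ N) (τ : ℝ)
    (m : ℕ) (hm1 : 1 ≤ m) (hmN : m ≤ N) (ζ : Fin (N + 1) → ℂ) :
    ∀ g w z : ℂ, g = gf E ε η τ → w = wf E ε η τ → z = zf E ε η τ →
    ∀ v : Fin (N + 1) → ℂ,
      v = (((List.range m).map
        (fun i => Complex.exp (Complex.I * τ * ε) • Vmat E ε η N (i + 1) τ)).prod).mulVec ζ →
    (v 0 = Complex.exp (Complex.I * m * τ * ε) *
      ((g * z) ^ m * ζ 0 +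
        ∑ j : Fin (N + 1), if 1 ≤ j.val ∧ j.val ≤ m then
          g * w * (g * z) ^ (j.val - 1) * ζ j else 0)) ∧
    (∀ k : Fin (N + 1), 1 ≤ k.val → k.val < m →
      v k = Complex.exp (Complex.I * m * τ * ε) *
        (g * w * (g * z) ^ (m - k.val) * ζ 0 + g * (starRingEnd ℂ) z * ζ k +
          ∑ j : Fin (N + 1), if k.val + 1 ≤ j.val ∧ j.val ≤ m then
            (g * w) ^ 2 * (g * z) ^ (j.val - k.val - 1) * ζ j else 0)) ∧
    (∀ k : Fin (N + 1), k.val = m →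
      v k = Complex.exp (Complex.I * m * τ * ε) *
        (g * w * ζ 0 + g * (starRingEnd ℂ) z * ζ k)) ∧
    (∀ k : Fin (N + 1), m < k.val →
      v k = Complex.exp (Complex.I * m * τ * ε) * ζ k) := by
  intro g w z hg hw hz v hv
  subst hg hw hz
  exact main_aux E ε η τ N m hm1 hmN ζ v hv
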